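/- arXiv:0903.4994 — 5 statements merged into one kernel-verified Lean document; each statement's English description precedes it below -/
import Mathlib

section
/- Every nonzero Z₂-graded associative algebra structure on a 1|1-dimensional complex vector space is equivalent (under an even linear automorphism) to exactly one of six structures: d₁ = −ψ_f^{ff}+ψ_e^{ef}−ψ_e^{fe}+ψ_f^{ee}, d₂ = ψ_f^{ff}, d₃ = −ψ_f^{ff}+ψ_e^{ef}, d₄ = ψ_f^{ff}+ψ_e^{fe}, d₅ = −ψ_f^{ff}+ψ_e^{ef}−ψ_e^{fe}, d₆ = ψ_f^{ee}. -/
/-! Framework: the `1|1`-dimensional complex graded vector space `W = ⟨e,f⟩`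
(`false` denotes the even basis element `e`, `true` the odd basis element `f`),
Hochschild cochains in coefficient form, and the Hochschild coboundary
`D(φ) = [d,φ]` given by the graded commutator of coderivations on `T(W)`. -/

/-- A degree-`n` multi-index of basis elements of `W`. -/
abbrev Idx (n : ℕ) := Fin n → Bool

/-- A degree-`n` Hochschild cochain `Cⁿ(W) = Hom(W^⊗n, W)`, recorded by its
coefficients: `φ J i` is the coefficient of `w_i` in `φ(w_J)`. -/
abbrev Cochain (n : ℕ) := Idx n → Bool → ℂ

/-- Parity (0 or 1) of a basis element: `e = false` is even, `f = true` is odd. -/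
def pb (b : Bool) : ℕ := if b then 1 else 0

/-- Total parity count of a multi-index. -/
def pc {n : ℕ} (J : Idx n) : ℕ := ∑ i, pb (J i)

/-- Parity count of the length-`t` prefix of a multi-index. -/
def pcP {n : ℕ} (J : Idx n) (t : ℕ) : ℕ :=
  ∑ i ∈ Finset.univ.filter (fun i : Fin n => i.val < t), pb (J i)

/-- The sign `(−1)^m`. -/
noncomputable def msign (m : ℕ) : ℂ := (-1) ^ m

/-- Replace the adjacent pair of entries at positions `k, k+1` of `J` by the single entry `j`. -/
def repl {n : ℕ} (J : Idx (n + 1)) (k : Fin n) (j : Bool) : Idx n :=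
  fun i => if i.val < k.val then J i.castSucc else if i.val = k.val then j else J i.succ

/-- The coderivation `ψ_i^{ab} ∈ Hom(W⊗W, W)` sending `w_a ⊗ w_b` to `w_i`,
in coefficient form: `delta2 a b i x y j` is the coefficient of `w_j` in `ψ_i^{ab}(w_x ⊗ w_y)`. -/
noncomputable def delta2 (a b i : Bool) : Bool → Bool → Bool → ℂ :=
  fun x y j => if x = a ∧ y = b ∧ j = i then 1 else 0

/-- The Hochschild coboundary `D(φ) = [d, φ] = d∘φ − (−1)^{|φ|} φ∘d` of a cochain
`φ ∈ Cⁿ(W)` with respect to an odd quadratic codifferential `d`, with the usual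
Koszul signs for insertions of coderivations. -/
noncomputable def Dmap (d : Bool → Bool → Bool → ℂ) {n : ℕ} (φ : Cochain n) :
    Cochain (n + 1) := fun J i =>
  (∑ j : Bool, φ (fun k => J k.castSucc) j * d j (J (Fin.last n)) i)
    + (∑ j : Bool, msign ((pc (fun k : Fin n => J k.succ) + pb j) * pb (J 0)) *
        (φ (fun k => J k.succ) j * d (J 0) j i))
    - ∑ k : Fin n, ∑ j : Bool,
        msign (pc (repl J k j) + pb i + pcP J k.val) *
          (φ (repl J k j) i * d (J k.castSucc) (J k.succ) j)

/-- The Hochschild coboundary as a linear map `Cⁿ(W) →ₗ Cⁿ⁺¹(W)`. -/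
noncomputable def Dlin (d : Bool → Bool → Bool → ℂ) (n : ℕ) :
    Cochain n →ₗ[ℂ] Cochain (n + 1) where
  toFun := Dmap d
  map_add' φ ψ := by
    funext J i
    simp only [Dmap, Pi.add_apply, mul_add, add_mul, Finset.sum_add_distrib]
    ring
  map_smul' c φ := by
    funext J i
    simp only [Dmap, Pi.smul_apply, smul_eq_mul, RingHom.id_apply, mul_add, mul_sub,
      Finset.mul_sum, mul_assoc, mul_left_comm]

/-- Hochschild cocycles: `ker (D : Cⁿ → Cⁿ⁺¹)`. -/
noncomputable def Zsp (d : Bool → Bool → Bool → ℂ) (n : ℕ) : Submodule ℂ (Cochain n) :=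
  LinearMap.ker (Dlin d n)

/-- Hochschild coboundaries: `im (D : Cⁿ⁻¹ → Cⁿ)` (there are none in degree `0`). -/
noncomputable def Bsp (d : Bool → Bool → Bool → ℂ) : (n : ℕ) → Submodule ℂ (Cochain n)
  | 0 => ⊥
  | (n + 1) => LinearMap.range (Dlin d n)

/-- The Hochschild cohomology `Hⁿ(d) = ker D / im D`. -/
abbrev Hsp (d : Bool → Bool → Bool → ℂ) (n : ℕ) :=
  (Zsp d n) ⧸ (Submodule.comap (Zsp d n).subtype (Bsp d n))

/-- The basis cochain `φ^I_i`, sending `w_I` to `w_i` and other basis tensors to `0`. -/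
noncomputable def bC {n : ℕ} (I : Idx n) (i : Bool) : Cochain n :=
  fun J j => if J = I ∧ j = i then 1 else 0

/-- `φ_e^{eⁿ}`: the cochain sending `e^⊗n` to `e` and all other basis tensors to `0`. -/
noncomputable def phiE (n : ℕ) : Cochain n := bC (fun _ => false) false

/-- `φ_f^{eⁿ}`: the cochain sending `e^⊗n` to `f` and all other basis tensors to `0`. -/
noncomputable def phiF (n : ℕ) : Cochain n := bC (fun _ => false) true

/-- `d₁ = ψ_e^{ef} − ψ_e^{fe} + ψ_f^{ee} − ψ_f^{ff}`. -/
noncomputable def dd1 : Bool → Bool → Bool → ℂ :=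
  fun a b i => delta2 false true false a b i - delta2 true false false a b i
    + delta2 false false true a b i - delta2 true true true a b i

/-- `d₂ = ψ_f^{ff}`. -/
noncomputable def dd2 : Bool → Bool → Bool → ℂ := delta2 true true true

/-- `d₃ = ψ_e^{ef} − ψ_f^{ff}`. -/
noncomputable def dd3 : Bool → Bool → Bool → ℂ :=
  fun a b i => delta2 false true false a b i - delta2 true true true a b i

/-- `d₄ = ψ_e^{fe} + ψ_f^{ff}`. -/
noncomputable def dd4 : Bool → Bool → Bool → ℂ :=
  fun a b i => delta2 true false false a b i + delta2 true true true a b i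

/-- `d₅ = ψ_e^{ef} − ψ_e^{fe} − ψ_f^{ff}`. -/
noncomputable def dd5 : Bool → Bool → Bool → ℂ :=
  fun a b i => delta2 false true false a b i - delta2 true false false a b i
    - delta2 true true true a b i

/-- `d₆ = ψ_f^{ee}`. -/
noncomputable def dd6 : Bool → Bool → Bool → ℂ := delta2 false false true

/-- A quadratic structure `d` on `W`, viewed as a cochain in `C²(W)`. -/
noncomputable def toC2 (d : Bool → Bool → Bool → ℂ) : Cochain 2 := fun J i => d (J 0) (J 1) i

/-- `d` is an odd (i.e. even as an algebra multiplication on `V = ΠW`) quadratic structure: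
all its components `ψ_i^{ab}` with `|a| + |b| + |i|` even vanish. -/
def IsOddStruct (d : Bool → Bool → Bool → ℂ) : Prop :=
  ∀ a b i : Bool, (pb a + pb b + pb i) % 2 = 0 → d a b i = 0

/-- The diagonal scaling determined by an even linear automorphism `g` of `W = ⟨e,f⟩`:
`g(e) = gE·e`, `g(f) = gO·f` (an even automorphism of a `1|1`-dimensional space
preserves each one-dimensional graded piece, hence is of this form). -/
noncomputable def gsc (gE gO : ℂ) : Bool → ℂ := fun b => if b then gO else gE

/-- `d` and `d'` are equivalent under an even linear automorphism `g` of `W`: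
`d' = g⁻¹ ∘ d ∘ (g ⊗ g)`, written without inverses as `g ∘ d' = d ∘ (g ⊗ g)`. -/
noncomputable def EquivCod (d d' : Bool → Bool → Bool → ℂ) : Prop :=
  ∃ gE gO : ℂ, gE ≠ 0 ∧ gO ≠ 0 ∧
    ∀ a b i : Bool, d' a b i * gsc gE gO i = d a b i * (gsc gE gO a * gsc gE gO b)

/-- The list of the six codifferentials `d₁, …, d₆`. -/
noncomputable def dlist : Fin 6 → (Bool → Bool → Bool → ℂ) := ![dd1, dd2, dd3, dd4, dd5, dd6]

/-!
An odd `d` has at most four nonzero coefficients, those of `ψ_f^{ee}`, `ψ_e^{ef}`, `ψ_e^{fe}`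
and `ψ_f^{ff}`, and `[d,d] = 0` amounts to four quadratic equations between them. The even
automorphism `e ↦ gE e, f ↦ gO f` rescales these coefficients by `gE²/gO, gO, gO, gO`. Solving
the equations case by case and normalising with a suitable `(gE, gO)` lands on one of
`d₁, …, d₆`; since the rescaling factors are nonzero, which of the first three coefficients
vanish is an invariant, and it already tells the six apart.
-/

namespace IsOddStruct

variable {d : Bool → Bool → Bool → ℂ}

theorem even_coeffs_eq_zero (hd : IsOddStruct d) :
    d false false false = 0 ∧ d false true true = 0 ∧ d true false true = 0 ∧
      d true true false = 0 :=
  ⟨hd _ _ _ rfl, hd _ _ _ rfl, hd _ _ _ rfl, hd _ _ _ rfl⟩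

-- For odd `d` the two Koszul-signed insertion terms of `[d,d]` duplicate the other two.
theorem Dmap_toC2_apply (hd : IsOddStruct d) (a b c i : Bool) :
    Dmap d (toC2 d) ![a, b, c] i =
      2 * ∑ j : Bool, (d a b j * d j c i + (-1) ^ pb a * (d b c j * d a j i)) := by
  obtain ⟨z1, z2, z3, z4⟩ := hd.even_coeffs_eq_zero
  cases a <;> cases b <;> cases c <;> cases i <;>
    simp only [Dmap, toC2, pc, pcP, pb, msign, repl, Finset.sum_filter, Fin.sum_univ_two,
      Fintype.sum_bool, Fin.isValue] <;>
    norm_num [Fin.last, Matrix.cons_val_two, z1, z2, z3, z4] <;> ring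

theorem coeff_equations_of_Dmap_eq_zero (hd : IsOddStruct d) (hD : Dmap d (toC2 d) = 0) :
    d false false true * (d false true false + d true false false) = 0 ∧
    d false true false * (d false true false + d true true true) = 0 ∧
    d false false true * (d true false false - d true true true) = 0 ∧
    d true false false * (d true true true - d true false false) = 0 := by
  obtain ⟨z1, z2, z3, z4⟩ := hd.even_coeffs_eq_zero
  have assoc (a b c i : Bool) := hd.Dmap_toC2_apply a b c i ▸ congrFun (congrFun hD ![a, b, c]) i
  have eee := assoc false false false false
  have eff := assoc false true true false
  have fee := assoc true false false true
  have ffe := assoc true true false false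
  simp only [Fintype.sum_bool, pb, z1, z2, z3, z4] at eee eff fee ffe
  norm_num at eee eff fee ffe
  exact ⟨by linear_combination eee, by linear_combination eff, by linear_combination fee,
    by linear_combination ffe⟩

end IsOddStruct

theorem isOddStruct_dlist (k : Fin 6) : IsOddStruct (dlist k) := by
  intro a b i h
  fin_cases k <;> cases a <;> cases b <;> cases i <;>
    simp_all [pb, dlist, dd1, dd2, dd3, dd4, dd5, dd6, delta2]

namespace EquivCod

variable {d d' : Bool → Bool → Bool → ℂ}

theorem of_odd_coeffs (hd : IsOddStruct d) (hd' : IsOddStruct d') {gE gO : ℂ}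
    (hE : gE ≠ 0) (hO : gO ≠ 0)
    (hee : d' false false true * gO = d false false true * (gE * gE))
    (hef : d' false true false = d false true false * gO)
    (hfe : d' true false false = d true false false * gO)
    (hff : d' true true true = d true true true * gO) :
    EquivCod d d' := by
  refine ⟨gE, gO, hE, hO, fun a b i => ?_⟩
  cases a <;> cases b <;> cases i <;> simp only [gsc, Bool.false_eq_true, if_true, if_false]
  · rw [hd _ _ _ rfl, hd' _ _ _ rfl, zero_mul, zero_mul]
  · exact hee
  · linear_combination gE * hef
  · rw [hd _ _ _ rfl, hd' _ _ _ rfl, zero_mul, zero_mul]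
  · linear_combination gE * hfe
  · rw [hd _ _ _ rfl, hd' _ _ _ rfl, zero_mul, zero_mul]
  · rw [hd _ _ _ rfl, hd' _ _ _ rfl, zero_mul, zero_mul]
  · linear_combination gO * hff

theorem exists_dlist_of_ee_ne_zero (hd : IsOddStruct d) (hD : Dmap d (toC2 d) = 0)
    (h1 : d false false true ≠ 0) : ∃ k, EquivCod d (dlist k) := by
  obtain ⟨E1, -, E4, -⟩ := hd.coeff_equations_of_Dmap_eq_zero hD
  have e4 : d true false false = d true true true :=
    sub_eq_zero.1 ((mul_eq_zero.1 E4).resolve_left h1)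
  have e1 : d false true false = -d true true true := by
    linear_combination (mul_eq_zero.1 E1).resolve_left h1 - e4
  by_cases h4 : d true true true = 0
  · refine ⟨5, of_odd_coeffs hd (isOddStruct_dlist 5) one_ne_zero h1 ?_ ?_ ?_ ?_⟩ <;>
      simp [dlist, dd6, delta2, e1, e4, h4]
  · -- the one place where algebraic closedness is needed: `gE` is a square root
    obtain ⟨gE, hgE⟩ :=
      IsAlgClosed.exists_eq_mul_self (-(d false false true * d true true true)⁻¹)
    have hgE0 : gE ≠ 0 := by
      rintro rfl
      simp [h1, h4] at hgE
    refine ⟨0, of_odd_coeffs hd (isOddStruct_dlist 0) hgE0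
      (neg_ne_zero.2 (inv_ne_zero h4)) ?_ ?_ ?_ ?_⟩ <;>
      simp [dlist, dd1, delta2, e1, e4, ← hgE] <;> field_simp

theorem exists_dlist_of_ee_eq_zero (hd : IsOddStruct d) (hD : Dmap d (toC2 d) = 0)
    (hne : d ≠ fun _ _ _ => 0) (h1 : d false false true = 0) : ∃ k, EquivCod d (dlist k) := by
  obtain ⟨-, E3, -, E5⟩ := hd.coeff_equations_of_Dmap_eq_zero hD
  by_cases h2 : d false true false = 0
  · by_cases h3 : d true false false = 0
    · have h4 : d true true true ≠ 0 := fun h4 => hne <| by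
        funext a b i
        cases a <;> cases b <;> cases i <;> first | exact hd _ _ _ rfl | assumption
      refine ⟨1, of_odd_coeffs hd (isOddStruct_dlist 1) one_ne_zero (inv_ne_zero h4)
        ?_ ?_ ?_ ?_⟩ <;> simp [dlist, dd2, delta2, h1, h2, h3, h4]
    · have e5 : d true true true = d true false false :=
        sub_eq_zero.1 ((mul_eq_zero.1 E5).resolve_left h3)
      refine ⟨3, of_odd_coeffs hd (isOddStruct_dlist 3) one_ne_zero (inv_ne_zero h3)
        ?_ ?_ ?_ ?_⟩ <;> simp [dlist, dd4, delta2, h1, h2, h3, e5]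
  · have e3 : d true true true = -d false true false := by
      linear_combination (mul_eq_zero.1 E3).resolve_left h2
    by_cases h3 : d true false false = 0
    · refine ⟨2, of_odd_coeffs hd (isOddStruct_dlist 2) one_ne_zero (inv_ne_zero h2)
        ?_ ?_ ?_ ?_⟩ <;> simp [dlist, dd3, delta2, h1, h2, h3, e3]
    · have e5 : d true false false = -d false true false := by
        linear_combination e3 - (mul_eq_zero.1 E5).resolve_left h3
      refine ⟨4, of_odd_coeffs hd (isOddStruct_dlist 4) one_ne_zero (inv_ne_zero h2)
        ?_ ?_ ?_ ?_⟩ <;> simp [dlist, dd5, delta2, h1, h2, e3, e5]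

end EquivCod

def zeroPattern (d : Bool → Bool → Bool → ℂ) : Prop × Prop × Prop :=
  (d false false true = 0, d false true false = 0, d true false false = 0)

theorem EquivCod.zeroPattern_eq {d d' : Bool → Bool → Bool → ℂ} (h : EquivCod d d') :
    zeroPattern d' = zeroPattern d := by
  obtain ⟨gE, gO, hE, hO, hrel⟩ := h
  have eq_zero_eq {x y u v : ℂ} (hu : u ≠ 0) (hv : v ≠ 0) (hxy : x * u = y * v) :
      (x = 0) = (y = 0) :=
    propext <| (mul_eq_zero_iff_right hu).symm.trans (hxy ▸ mul_eq_zero_iff_right hv)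
  simp only [zeroPattern, Prod.mk.injEq]
  exact ⟨eq_zero_eq hO (mul_ne_zero hE hE) (hrel false false true),
    eq_zero_eq hE (mul_ne_zero hE hO) (hrel false true false),
    eq_zero_eq hE (mul_ne_zero hO hE) (hrel true false false)⟩

theorem zeroPattern_dlist_injective : Function.Injective fun k => zeroPattern (dlist k) := by
  intro k k' h
  fin_cases k <;> fin_cases k' <;>
    simp_all [zeroPattern, dlist, dd1, dd2, dd3, dd4, dd5, dd6, delta2]

/-- Every nonzero `ℤ₂`-graded associative algebra structure (odd quadratic
codifferential, `[d,d] = 0`) on the `1|1`-dimensional complex space `W = ⟨e,f⟩` is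
equivalent, under an even linear automorphism, to exactly one of
`d₁ = −ψ_f^{ff}+ψ_e^{ef}−ψ_e^{fe}+ψ_f^{ee}`, `d₂ = ψ_f^{ff}`, `d₃ = −ψ_f^{ff}+ψ_e^{ef}`,
`d₄ = ψ_f^{ff}+ψ_e^{fe}`, `d₅ = −ψ_f^{ff}+ψ_e^{ef}−ψ_e^{fe}`, `d₆ = ψ_f^{ee}`. -/
theorem moduli_space_six_points (d : Bool → Bool → Bool → ℂ)
    (hodd : IsOddStruct d)
    (hcod : Dmap d (toC2 d) = 0)
    (hne : d ≠ fun _ _ _ => 0) :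
    ∃! k : Fin 6, EquivCod d (dlist k) := by
  refine existsUnique_of_exists_of_unique ?_ fun k k' hk hk' => ?_
  · by_cases h1 : d false false true = 0
    · exact EquivCod.exists_dlist_of_ee_eq_zero hodd hcod hne h1
    · exact EquivCod.exists_dlist_of_ee_ne_zero hodd hcod h1
  · exact zeroPattern_dlist_injective (hk.zeroPattern_eq.trans hk'.zeroPattern_eq.symm)
end

section
/- For the codifferential d₃ = ψ_e^{ef} − ψ_f^{ff} on a 1|1-dimensional space, the Hochschild cohomology vanishes in all degrees: Hⁿ(d₃) = 0 for all n ≥ 0. -/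
/-! Read through the coefficient form of `Dmap`, `d₃` is the product on `W` with
`x · f = ±x` and `x · e = 0`, so `f` is a right unit up to sign, and
`D ψ (J₀ … Jₘ) = ψ(J₀ … Jₘ₋₁) · Jₘ + J₀ · ψ(J₁ … Jₘ) + Σₖ ± ψ(…, Jₖ Jₖ₊₁, …)`.
A contracting homotopy `G : Cⁿ⁺¹ → Cⁿ` is obtained by feeding a letter in front:
`(Gφ)(K)_f = φ(e K)_e`, and `(Gφ)(K)_e = (−1)^{pc K} φ(f K)_e` unless `K` starts with `e`, in
which case it is `0`. In `DG + GD` the terms `ψ(…) · Jₘ` cancel, the inner terms cancel in pairs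
except the first one of `GD`, and what is left, this one and the terms `J₀ · ψ(…)`, adds up to `φ`.
Hence `DG + GD = id` in positive degrees and `GD = id` in degree `0`. -/

lemma msign_congr {a b : ℕ} (h : a % 2 = b % 2) : msign a = msign b := by
  rw [msign, msign, neg_one_pow_eq_pow_mod_two, h, ← neg_one_pow_eq_pow_mod_two]

lemma msign_one_add (a : ℕ) : msign (1 + a) = -msign a := by
  simp [msign, pow_add]

@[simp] lemma pb_true : pb true = 1 := rfl

@[simp] lemma pb_false : pb false = 0 := rfl

lemma pc_eq_add_removeNth {n : ℕ} (J : Idx (n + 1)) (p : Fin (n + 1)) :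
    pc J = pb (J p) + pc (p.removeNth J) :=
  Fin.sum_univ_succAbove _ p

lemma msign_mul_self (a : ℕ) : msign a * msign a = 1 := by
  rw [msign, ← mul_pow]; norm_num

lemma msign_pc_of_apply_eq_true {n : ℕ} {J : Idx (n + 1)} {p : Fin (n + 1)} (h : J p = true) :
    msign (pc J) = -msign (pc (p.removeNth J)) := by
  rw [pc_eq_add_removeNth J p, h, pb_true, msign_one_add]

lemma pc_cons {n : ℕ} (a : Bool) (K : Idx n) : pc (Fin.cons a K : Idx (n + 1)) = pb a + pc K := by
  simpa using pc_eq_add_removeNth (Fin.cons a K : Idx (n + 1)) 0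

lemma pcP_zero {n : ℕ} (J : Idx n) : pcP J 0 = 0 := by
  simp [pcP]

lemma pcP_succ {n : ℕ} (J : Idx n) (k : Fin n) : pcP J (k + 1) = pcP J k + pb (J k) := by
  have split (i : Fin n) : (if i.val < k + 1 then pb (J i) else 0)
      = (if i.val < k then pb (J i) else 0) + (if k = i then pb (J i) else 0) := by
    rcases lt_trichotomy i.val k.val with h | h | h
    · simp [h, Nat.lt_succ_of_lt h, Fin.ext_iff, h.ne']
    · obtain rfl : i = k := Fin.ext h
      simp
    · simp [h.not_gt, show ¬ i.val < k.val + 1 by omega, Fin.ext_iff, h.ne]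
  simp only [pcP, Finset.sum_filter, split, Finset.sum_add_distrib, Finset.sum_ite_eq,
    Finset.mem_univ, if_true]

lemma pcP_cons {n : ℕ} (a : Bool) (K : Idx n) (t : ℕ) :
    pcP (Fin.cons a K : Idx (n + 1)) (t + 1) = pb a + pcP K t := by
  simp [pcP, Finset.sum_filter, Fin.sum_univ_succ]

lemma removeNth_succ_cons {n : ℕ} (a : Bool) (K : Idx (n + 1)) (p : Fin (n + 1)) :
    p.succ.removeNth (Fin.cons a K : Idx (n + 2)) = Fin.cons a (p.removeNth K) :=
  Fin.cons_comp_succ_succAbove a K p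

lemma init_cons {n : ℕ} (a : Bool) (K : Idx (n + 1)) :
    Fin.init (Fin.cons a K : Idx (n + 2)) = Fin.cons a (Fin.init K) := by
  rw [← Fin.removeNth_last, ← Fin.removeNth_last, ← Fin.succ_last, removeNth_succ_cons]

lemma repl_eq_removeNth {n : ℕ} (J : Idx (n + 1)) (k : Fin n) :
    repl J k (J k.castSucc) = k.succ.removeNth J := by
  funext i
  simp only [repl, Fin.removeNth, Fin.succAbove, Fin.lt_def, Fin.val_castSucc, Fin.val_succ]
  rcases lt_trichotomy i.val k.val with h | h | h
  · simp [h, Nat.lt_succ_of_lt h]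
  · obtain rfl : i = k := Fin.ext h
    simp
  · simp [h.not_gt, h.ne', show ¬ i.val < k.val + 1 by omega]

lemma dd3_apply (a b c : Bool) :
    dd3 a b c = if b = true ∧ c = a then msign (pb a) else 0 := by
  cases a <;> cases b <;> cases c <;> simp [dd3, delta2, msign]

/- The three kinds of terms of `Dmap dd3`. The sign of `innerTerm` is the Koszul sign of `Dmap`
rewritten with the help of `J (k + 1) = f`. -/
noncomputable def rightTerm {m : ℕ} (ψ : Cochain m) (J : Idx (m + 1)) (i : Bool) : ℂ :=
  if J (Fin.last m) = true then msign (pb i) * ψ (Fin.init J) i else 0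

noncomputable def leftTerm {m : ℕ} (ψ : Cochain m) (J : Idx (m + 1)) (i : Bool) : ℂ :=
  if J 0 = i then msign (pc (Fin.tail J) * pb i) * ψ (Fin.tail J) true else 0

noncomputable def innerTerm {m : ℕ} (ψ : Cochain m) (J : Idx (m + 1)) (i : Bool) (k : Fin m) : ℂ :=
  if J k.succ = true then msign (pb i + pc J + pcP J (k + 1)) * ψ (k.succ.removeNth J) i else 0

theorem Dmap_dd3_apply {m : ℕ} (ψ : Cochain m) (J : Idx (m + 1)) (i : Bool) :
    Dmap dd3 ψ J i = rightTerm ψ J i + leftTerm ψ J i + ∑ k, innerTerm ψ J i k := by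
  have hinit : (fun k : Fin m => J k.castSucc) = Fin.init J := rfl
  have htail : (fun k : Fin m => J k.succ) = Fin.tail J := rfl
  simp only [Dmap, rightTerm, leftTerm, innerTerm, hinit, htail, Fintype.sum_bool, dd3_apply,
    sub_eq_add_neg, ← Finset.sum_neg_distrib]
  congr 1
  congr 1
  · cases J (Fin.last m) <;> cases i <;> simp [mul_comm]
  · cases J 0 <;> cases i <;> simp [msign, pow_succ]
  · refine Finset.sum_congr rfl fun k _ => ?_
    have hpc := pc_eq_add_removeNth J k.succ
    have hr := repl_eq_removeNth J k
    rw [show (k : ℕ) + 1 = k.castSucc + 1 from rfl, pcP_succ, Fin.val_castSucc]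
    cases hk : J k.castSucc <;> rw [hk] at hr <;> cases hs : J k.succ <;> simp [hs] at hpc <;>
      simp [hr, hpc, msign, pow_add, mul_comm]

section cons

variable {m : ℕ} (φ : Cochain (m + 1)) (a : Bool) (K : Idx (m + 1)) (i : Bool)

lemma rightTerm_cons :
    rightTerm φ (Fin.cons a K) i =
      if K (Fin.last m) = true then msign (pb i) * φ (Fin.cons a (Fin.init K)) i else 0 := by
  simp only [rightTerm, Fin.cons_last, init_cons]

lemma leftTerm_cons :
    leftTerm φ (Fin.cons a K) i = if a = i then msign (pc K * pb i) * φ K true else 0 := by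
  simp only [leftTerm, Fin.cons_zero, Fin.tail_cons]

lemma innerTerm_cons (k : Fin (m + 1)) :
    innerTerm φ (Fin.cons a K) i k =
      if K k = true then msign (pb i + pc K + pcP K k) * φ (Fin.cons a (k.removeNth K)) i
      else 0 := by
  simp only [innerTerm, Fin.cons_succ, removeNth_succ_cons, pc_cons, pcP_cons]
  congr 2
  exact msign_congr (by omega)

end cons

def HeadIsE {n : ℕ} (K : Idx n) : Prop := ∃ h : 0 < n, K ⟨0, h⟩ = false

instance {n : ℕ} (K : Idx n) : Decidable (HeadIsE K) :=
  inferInstanceAs (Decidable (∃ _ : _, _))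

lemma headIsE_iff {m : ℕ} (K : Idx (m + 1)) : HeadIsE K ↔ K 0 = false := by
  simp [HeadIsE]

lemma headIsE_iff_of_head_eq {m : ℕ} {X : Idx m} {K : Idx (m + 1)}
    (hX : ∀ h : 0 < m, X ⟨0, h⟩ = K 0) : HeadIsE X ↔ 0 < m ∧ K 0 = false :=
  ⟨fun ⟨h, hx⟩ => ⟨h, hX h ▸ hx⟩, fun ⟨h, hk⟩ => ⟨h, (hX h).trans hk⟩⟩

lemma headIsE_init {m : ℕ} (K : Idx (m + 1)) : HeadIsE (Fin.init K) ↔ 0 < m ∧ K 0 = false :=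
  headIsE_iff_of_head_eq fun _ => rfl

lemma headIsE_removeNth_succ {m : ℕ} (K : Idx (m + 1)) (k : Fin m) :
    HeadIsE (k.succ.removeNth K) ↔ K 0 = false := by
  rw [headIsE_iff_of_head_eq fun _ => rfl]
  exact and_iff_right (Fin.pos k)

noncomputable def contraction {n : ℕ} (φ : Cochain (n + 1)) : Cochain n := fun K i =>
  if i then φ (Fin.cons false K) false
  else if HeadIsE K then 0 else msign (pc K) * φ (Fin.cons true K) false

lemma contraction_true {n : ℕ} (φ : Cochain (n + 1)) (K : Idx n) :
    contraction φ K true = φ (Fin.cons false K) false := rfl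

lemma contraction_false_of_headIsE {n : ℕ} (φ : Cochain (n + 1)) {K : Idx n} (hK : HeadIsE K) :
    contraction φ K false = 0 := if_neg Bool.false_ne_true |>.trans (if_pos hK)

lemma contraction_false_of_not_headIsE {n : ℕ} (φ : Cochain (n + 1)) {K : Idx n}
    (hK : ¬HeadIsE K) : contraction φ K false = msign (pc K) * φ (Fin.cons true K) false :=
  if_neg Bool.false_ne_true |>.trans (if_neg hK)

lemma Dmap_contraction_add_contraction_Dmap_apply_true {m : ℕ} (φ : Cochain (m + 1)) (K : Idx (m + 1)) :
    Dmap dd3 (contraction φ) K true + contraction (Dmap dd3 φ) K true = φ K true := by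
  rw [contraction_true, Dmap_dd3_apply, Dmap_dd3_apply, Fin.sum_univ_succ]
  have right : rightTerm (contraction φ) K true + rightTerm φ (Fin.cons false K) false = 0 := by
    rw [rightTerm_cons, rightTerm]
    split_ifs <;> simp [contraction_true, msign]
  have left : leftTerm (contraction φ) K true + innerTerm φ (Fin.cons false K) false 0 = 0 := by
    rw [innerTerm_cons, leftTerm]
    split_ifs with h
    · simp only [contraction_true, pb_true, pb_false, mul_one, zero_add, Fin.val_zero, pcP_zero,
        add_zero, msign_pc_of_apply_eq_true h, Fin.removeNth_zero]
      ring
    · simp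
  have inner : ∑ k, innerTerm (contraction φ) K true k
      + ∑ k : Fin m, innerTerm φ (Fin.cons false K) false k.succ = 0 := by
    rw [← Finset.sum_add_distrib]
    refine Finset.sum_eq_zero fun k _ => ?_
    rw [innerTerm_cons, innerTerm]
    split_ifs
    · simp only [contraction_true, pb_true, pb_false, zero_add, Fin.val_succ, add_assoc,
        msign_one_add]
      ring
    · simp
  have main : leftTerm φ (Fin.cons false K) false = φ K true := by
    simp [leftTerm_cons, msign]
  linear_combination right + left + inner + main

lemma Dmap_contraction_add_contraction_Dmap_apply_false {m : ℕ} (φ : Cochain (m + 1)) (K : Idx (m + 1)) :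
    Dmap dd3 (contraction φ) K false + contraction (Dmap dd3 φ) K false = φ K false := by
  rw [Dmap_dd3_apply]
  cases hK : K 0
  · have hE : HeadIsE K := (headIsE_iff K).2 hK
    have right : rightTerm (contraction φ) K false = 0 := by
      rw [rightTerm]
      split_ifs with hlast
      · obtain rfl | hm := Nat.eq_zero_or_pos m
        · exact absurd hK (by simpa using hlast)
        · rw [contraction_false_of_headIsE _ ((headIsE_init K).2 ⟨hm, hK⟩), mul_zero]
      · rfl
    have left : leftTerm (contraction φ) K false = φ K false := by
      have hcons : Fin.cons false (Fin.tail K) = K := hK ▸ Fin.cons_self_tail K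
      rw [leftTerm, if_pos hK, contraction_true, hcons, pb_false, mul_zero, msign, pow_zero,
        one_mul]
    have inner (k : Fin m) : innerTerm (contraction φ) K false k = 0 := by
      rw [innerTerm]
      split_ifs
      · rw [contraction_false_of_headIsE _ ((headIsE_removeNth_succ K k).2 hK), mul_zero]
      · rfl
    rw [right, left, Finset.sum_eq_zero fun k _ => inner k, contraction_false_of_headIsE _ hE]
    ring
  · have hE : ¬HeadIsE K := by simp [headIsE_iff, hK]
    rw [contraction_false_of_not_headIsE _ hE, Dmap_dd3_apply, Fin.sum_univ_succ]
    have right :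
        rightTerm (contraction φ) K false + msign (pc K) * rightTerm φ (Fin.cons true K) false = 0 := by
      rw [rightTerm_cons, rightTerm]
      split_ifs with hlast
      · rw [contraction_false_of_not_headIsE _ (by simp [headIsE_init, hK]),
          msign_pc_of_apply_eq_true hlast, Fin.removeNth_last]
        ring
      · ring
    have left : leftTerm (contraction φ) K false = 0 := by
      simp [leftTerm, hK]
    have left' : leftTerm φ (Fin.cons true K) false = 0 := by
      simp [leftTerm_cons]
    have inner : ∑ k, innerTerm (contraction φ) K false k
        + msign (pc K) * ∑ k : Fin m, innerTerm φ (Fin.cons true K) false k.succ = 0 := by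
      rw [Finset.mul_sum, ← Finset.sum_add_distrib]
      refine Finset.sum_eq_zero fun k _ => ?_
      rw [innerTerm_cons, innerTerm]
      split_ifs with hk
      · rw [contraction_false_of_not_headIsE _ (by simp [headIsE_removeNth_succ, hK]),
          msign_pc_of_apply_eq_true hk, Fin.val_succ]
        simp only [pb_false, zero_add]
        ring
      · ring
    have main : msign (pc K) * innerTerm φ (Fin.cons true K) false 0 = φ K false := by
      have hcons : Fin.cons true (Fin.tail K) = K := hK ▸ Fin.cons_self_tail K
      rw [innerTerm_cons, if_pos hK, Fin.removeNth_zero, hcons]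
      simp only [pb_false, zero_add, Fin.val_zero, pcP_zero, add_zero, ← mul_assoc, msign_mul_self,
        one_mul]
    linear_combination right + left + msign (pc K) * left' + inner + main

theorem Dmap_contraction_add_contraction_Dmap {m : ℕ} (φ : Cochain (m + 1)) :
    Dmap dd3 (contraction φ) + contraction (Dmap dd3 φ) = φ := by
  funext K i
  cases i
  · exact Dmap_contraction_add_contraction_Dmap_apply_false φ K
  · exact Dmap_contraction_add_contraction_Dmap_apply_true φ K

theorem contraction_Dmap_of_degree_zero (φ : Cochain 0) : contraction (Dmap dd3 φ) = φ := by
  funext K i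
  have hK : ∀ a : Bool, Fin.init (Fin.cons a K : Idx 1) = K := fun _ => Subsingleton.elim _ _
  cases i
  · rw [contraction_false_of_not_headIsE _ fun ⟨h, _⟩ => h.false, Dmap_dd3_apply]
    simp [rightTerm, leftTerm, hK, pc, msign]
  · rw [contraction_true, Dmap_dd3_apply]
    simp [rightTerm, leftTerm, pc, msign]

lemma contraction_zero {n : ℕ} : contraction (0 : Cochain (n + 1)) = 0 := by
  funext K i
  cases i <;> simp [contraction]

/-- For `d₃ = ψ_e^{ef} − ψ_f^{ff}` the Hochschild cohomology vanishes in all degrees: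
every cocycle is a coboundary (in degree `0`: the only cocycle is `0`). -/
theorem d3_cohomology_vanishes : ∀ n : ℕ, Zsp dd3 n ≤ Bsp dd3 n := by
  rintro (_ | m) φ (hφ : Dmap dd3 φ = 0)
  · show φ = 0
    rw [← contraction_Dmap_of_degree_zero φ, hφ, contraction_zero]
  · refine ⟨contraction φ, show Dmap dd3 (contraction φ) = φ from ?_⟩
    simpa [hφ, contraction_zero] using Dmap_contraction_add_contraction_Dmap φ
end

section
/- For the codifferential d₅ = ψ_e^{ef} − ψ_e^{fe} − ψ_f^{ff} on a 1|1-dimensional space, Hⁿ(d₅) is 2-dimensional for every n ≥ 0, spanned by the cochains φ_e^{eⁿ} and φ_f^{eⁿ} (sending e^⊗n to e and to f respectively). -/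
/-!
Write a cochain `φ ∈ Cⁿ(W)` through its components `A = φ(·)_e` and `B = φ(·)_f`, functions on
words in `e, f`. For `d₅` the coboundary is `D φ = (R A + S B, -R B)` (`Dlin_dd5_apply`), where
`S γ = e ⊗ γ - γ ⊗ e` (`coboundOff`) and `R` (`coboundDiag`) inserts `d₅` between letters. In `R`
the terms coming from `e f ↦ e` and `f e ↦ -e` cancel against the two outer insertions, and what is
left only merges adjacent `f`'s, with alternating signs (`coboundDiag_snoc_true`). On a maximal run
of `f`'s this is exact in positive length, and acting on the last run gives a contracting homotopy
`k` (`homotopy`) with `R k + k R = 1 - π`, where `π` (`projE`) keeps only the coefficient of `eⁿ`.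

As `R` commutes with `S`, a cocycle `(A, B)`, i.e. `R B = 0` and `R A = -S B`, is the coboundary of
`(k A + k S k B, -k B)` plus its `eⁿ`-part `A(eⁿ) φ_e^{eⁿ} + B(eⁿ) φ_f^{eⁿ}`, while every coboundary
vanishes at `eⁿ`. So evaluation at `eⁿ` identifies `Hⁿ(d₅)` with `ℂ²`.
-/

namespace D5

open Finset

variable {n : ℕ}

lemma const_false_eq_snoc : (fun _ => false : Idx (n + 1)) = Fin.snoc (fun _ => false) false := by
  funext i; cases i using Fin.lastCases <;> simp

lemma snoc_eq_const_false_iff (X : Idx n) (c : Bool) :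
    (Fin.snoc X c : Idx (n + 1)) = (fun _ => false) ↔ X = (fun _ => false) ∧ c = false := by
  rw [const_false_eq_snoc, Fin.snoc_inj]

lemma cons_eq_const_false_iff (c : Bool) (X : Idx n) :
    (Fin.cons c X : Idx (n + 1)) = (fun _ => false) ↔ c = false ∧ X = (fun _ => false) := by
  rw [← Fin.cons_self_tail (fun _ => false : Idx (n + 1)), Fin.cons_inj]; rfl

lemma tail_snoc (X : Idx (n + 1)) (c : Bool) :
    Fin.tail (Fin.snoc X c : Idx (n + 2)) = Fin.snoc (Fin.tail X) c := by
  cases X using Fin.consCases with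
  | cons a Y => rw [← Fin.cons_snoc_eq_snoc_cons, Fin.tail_cons, Fin.tail_cons]

lemma msign_add (a b : ℕ) : msign (a + b) = msign a * msign b := pow_add _ _ _

lemma msign_zero : msign 0 = 1 := pow_zero _

lemma msign_one : msign 1 = -1 := pow_one _

lemma msign_mul_self (a : ℕ) : msign a * msign a = 1 := by
  rw [← msign_add, msign, ← two_mul, pow_mul]; norm_num

lemma pc_snoc (X : Idx n) (c : Bool) : pc (Fin.snoc X c : Idx (n + 1)) = pc X + pb c := by
  simp [pc, Fin.sum_univ_castSucc]

lemma pcP_snoc (X : Idx n) (c : Bool) {t : ℕ} (ht : t ≤ n) :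
    pcP (Fin.snoc X c : Idx (n + 1)) t = pcP X t := by
  simp only [pcP, sum_filter, Fin.sum_univ_castSucc, Fin.snoc_castSucc, Fin.val_castSucc,
    Fin.val_last, not_lt.2 ht, if_false, add_zero]

lemma pcP_self (X : Idx n) : pcP X n = pc X := by
  simp [pcP, pc]

lemma repl_snoc_castSucc (X : Idx (n + 1)) (c : Bool) (k : Fin n) (j : Bool) :
    repl (Fin.snoc X c : Idx (n + 2)) k.castSucc j = Fin.snoc (repl X k j) c := by
  funext i
  cases i using Fin.lastCases with
  | last => simp [repl, show ¬ n < k by omega, show n ≠ k by omega]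
  | cast i =>
    simp only [repl, Fin.snoc_castSucc, Fin.val_castSucc]
    split_ifs
    · rfl
    · rfl
    · rw [Fin.succ_castSucc, Fin.snoc_castSucc]

lemma repl_snoc_snoc_last (Y : Idx n) (a c j : Bool) :
    repl (Fin.snoc (Fin.snoc Y a) c : Idx (n + 2)) (Fin.last n) j = Fin.snoc Y j := by
  funext i
  cases i using Fin.lastCases with
  | last => simp [repl]
  | cast i => simp [repl, i.isLt]

/-- The summand of `Dmap dd5` inserting `d₅` at positions `k, k + 1` with output letter `j`,
without the factor `(-1)^{|i|}` that depends on the output letter `i` of the cochain. -/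
noncomputable def insertTerm (γ : Idx n → ℂ) (J : Idx (n + 1)) (k : Fin n) (j : Bool) : ℂ :=
  msign (pc (repl J k j) + pcP J k) * (γ (repl J k j) * dd5 (J k.castSucc) (J k.succ) j)

noncomputable def coboundDiag (n : ℕ) : (Idx n → ℂ) →ₗ[ℂ] (Idx (n + 1) → ℂ) where
  toFun γ J :=
    (if J (Fin.last n) then γ (Fin.init J) else 0)
      + (if J 0 then msign (pc (Fin.tail J) + 1) * γ (Fin.tail J) else 0)
      - ∑ k, ∑ j, insertTerm γ J k j
  map_add' γ δ := by
    funext J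
    simp only [insertTerm, Pi.add_apply, mul_add, add_mul, sum_add_distrib]
    split_ifs <;> ring
  map_smul' c γ := by
    funext J
    simp only [insertTerm, Pi.smul_apply, smul_eq_mul, RingHom.id_apply, mul_sub, mul_add,
      mul_sum, mul_ite, mul_zero, mul_assoc, mul_left_comm c]

lemma insertTerm_snoc_castSucc (γ : Idx (n + 1) → ℂ) (X : Idx (n + 1)) (c : Bool) (k : Fin n)
    (j : Bool) :
    insertTerm γ (Fin.snoc X c) k.castSucc j
      = msign (pb c) * insertTerm (fun Y => γ (Fin.snoc Y c)) X k j := by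
  simp only [insertTerm, repl_snoc_castSucc, pc_snoc, Fin.val_castSucc,
    pcP_snoc X c (k.isLt.le.trans n.le_succ), Fin.snoc_castSucc, Fin.succ_castSucc, msign_add]
  ring

lemma sum_insertTerm_snoc_snoc_last (γ : Idx (n + 1) → ℂ) (Y : Idx n) (a c : Bool) :
    ∑ j, insertTerm γ (Fin.snoc (Fin.snoc Y a) c) (Fin.last n) j
      = (if c then γ (Fin.snoc Y a) else 0) - (if a && !c then γ (Fin.snoc Y false) else 0) := by
  have hsign (j : Bool) : msign (pc Y + pb j + pc Y) = msign (pb j) := by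
    rw [add_right_comm, msign_add, msign_add, msign_mul_self, one_mul]
  simp only [insertTerm, repl_snoc_snoc_last, pc_snoc, Fin.val_last, pcP_snoc _ _ le_rfl,
    pcP_snoc _ _ n.le_succ, pcP_self, hsign, Fintype.sum_bool, Fin.snoc_castSucc, Fin.succ_last,
    Fin.snoc_last]
  cases a <;> cases c <;> simp [dd5, delta2, pb, msign_zero, msign_one]

lemma coboundDiag_zero_apply (γ : Idx 0 → ℂ) (J : Idx 1) : coboundDiag 0 γ J = 0 := by
  have : Fin.init J = Fin.tail J := Subsingleton.elim _ _
  simp only [coboundDiag, LinearMap.coe_mk, AddHom.coe_mk, this, pc, univ_eq_empty,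
    sum_empty, msign_one, zero_add, Fin.last_zero]
  split_ifs <;> ring

lemma coboundDiag_snoc (γ : Idx (n + 1) → ℂ) (X : Idx (n + 1)) (c : Bool) :
    coboundDiag (n + 1) γ (Fin.snoc X c)
      = (if c && X (Fin.last n) then γ X else 0)
        + msign (pb c) * coboundDiag n (fun Y => γ (Fin.snoc Y c)) X := by
  cases X using Fin.snocCases with
  | snoc Y a =>
    simp only [coboundDiag, LinearMap.coe_mk, AddHom.coe_mk, Fin.snoc_last, Fin.init_snoc,
      Fin.snoc_apply_zero, tail_snoc, pc_snoc, Fin.sum_univ_castSucc, insertTerm_snoc_castSucc,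
      sum_insertTerm_snoc_snoc_last, ← mul_sum]
    cases a <;> cases c <;> simp [pb, msign_zero, msign_one, msign_add] <;> split_ifs <;> ring

lemma coboundDiag_snoc_false (γ : Idx (n + 1) → ℂ) (X : Idx (n + 1)) :
    coboundDiag (n + 1) γ (Fin.snoc X false)
      = coboundDiag n (fun Y => γ (Fin.snoc Y false)) X := by
  simp [coboundDiag_snoc, pb, msign_zero]

lemma coboundDiag_snoc_true (γ : Idx (n + 1) → ℂ) (X : Idx (n + 1)) :
    coboundDiag (n + 1) γ (Fin.snoc X true)
      = (if X (Fin.last n) then γ X else 0) - coboundDiag n (fun Y => γ (Fin.snoc Y true)) X := by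
  simp [coboundDiag_snoc, pb, msign_one, sub_eq_add_neg]

noncomputable def prependE (n : ℕ) : (Idx n → ℂ) →ₗ[ℂ] (Idx (n + 1) → ℂ) where
  toFun γ J := if J 0 = false then γ (Fin.tail J) else 0
  map_add' γ δ := by funext J; simp only [Pi.add_apply]; split_ifs <;> simp
  map_smul' c γ := by funext J; simp only [Pi.smul_apply]; split_ifs <;> simp

noncomputable def appendE (n : ℕ) : (Idx n → ℂ) →ₗ[ℂ] (Idx (n + 1) → ℂ) where
  toFun γ J := if J (Fin.last n) = false then γ (Fin.init J) else 0
  map_add' γ δ := by funext J; simp only [Pi.add_apply]; split_ifs <;> simp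
  map_smul' c γ := by funext J; simp only [Pi.smul_apply]; split_ifs <;> simp

noncomputable def coboundOff (n : ℕ) : (Idx n → ℂ) →ₗ[ℂ] (Idx (n + 1) → ℂ) :=
  prependE n - appendE n

lemma Dlin_dd5_apply (φ : Cochain n) (J : Idx (n + 1)) (i : Bool) :
    Dlin dd5 n φ J i = if i then -coboundDiag n (φ · true) J
      else coboundDiag n (φ · false) J + coboundOff n (φ · true) J := by
  have hinsert : ∑ k : Fin n, ∑ j, msign (pc (repl J k j) + pb i + pcP J k) *
        (φ (repl J k j) i * dd5 (J k.castSucc) (J k.succ) j)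
      = msign (pb i) * ∑ k, ∑ j, insertTerm (φ · i) J k j := by
    simp only [insertTerm, mul_sum, msign_add]
    exact sum_congr rfl fun k _ => sum_congr rfl fun j _ => by ring
  have hinit : (fun k : Fin n => J k.castSucc) = Fin.init J := rfl
  have htail : (fun k : Fin n => J k.succ) = Fin.tail J := rfl
  rw [Dlin, LinearMap.coe_mk, AddHom.coe_mk, Dmap, hinsert, hinit, htail]
  cases i <;> cases h0 : J 0 <;> cases hl : J (Fin.last n) <;>
    simp [coboundDiag, coboundOff, prependE, appendE, dd5, delta2, pb, h0, hl,
      msign_zero, msign_one, msign_add] <;> ring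

lemma prependE_cons (γ : Idx n → ℂ) (a : Bool) (Y : Idx n) :
    prependE n γ (Fin.cons a Y) = if a = false then γ Y else 0 := by
  simp [prependE]

lemma prependE_snoc (γ : Idx (n + 1) → ℂ) (Y : Idx (n + 1)) (c : Bool) :
    prependE (n + 1) γ (Fin.snoc Y c) = prependE n (fun W => γ (Fin.snoc W c)) Y := by
  cases Y using Fin.consCases with
  | cons b W => rw [← Fin.cons_snoc_eq_snoc_cons, prependE_cons, prependE_cons]

lemma appendE_snoc (γ : Idx n → ℂ) (Y : Idx n) (c : Bool) :
    appendE n γ (Fin.snoc Y c) = if c = false then γ Y else 0 := by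
  simp [appendE]

lemma coboundDiag_prependE (γ : Idx n → ℂ) :
    coboundDiag (n + 1) (prependE n γ) = prependE (n + 1) (coboundDiag n γ) := by
  induction n with
  | zero =>
    funext J
    cases J using Fin.consCases with
    | cons a Z =>
    cases Z using Fin.snocCases with
    | snoc X c =>
    rw [prependE_cons, Fin.cons_snoc_eq_snoc_cons]
    cases a <;> cases c <;> simp [coboundDiag_snoc_false, coboundDiag_snoc_true,
      coboundDiag_zero_apply, prependE_cons]
  | succ n ih =>
    funext J
    cases J using Fin.consCases with
    | cons a Z =>
    cases Z using Fin.snocCases with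
    | snoc X c =>
    rw [prependE_cons, Fin.cons_snoc_eq_snoc_cons]
    cases c
    · simp_rw [coboundDiag_snoc_false, prependE_snoc, ih, prependE_cons]
    · simp_rw [coboundDiag_snoc_true, prependE_snoc, ih, prependE_cons, Fin.cons_last]
      split_ifs <;> simp

lemma coboundDiag_appendE (γ : Idx n → ℂ) :
    coboundDiag (n + 1) (appendE n γ) = appendE (n + 1) (coboundDiag n γ) := by
  funext J
  cases J using Fin.snocCases with
  | snoc X c =>
    cases c
    · simp_rw [coboundDiag_snoc_false, appendE_snoc]; simp
    · have hzero : (fun Y : Idx n => appendE n γ (Fin.snoc Y true)) = 0 := by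
        funext Y; simp [appendE_snoc]
      cases X using Fin.snocCases with
      | snoc Y a =>
        rw [coboundDiag_snoc_true, hzero, map_zero]
        cases a <;> simp [appendE_snoc]

lemma coboundDiag_coboundOff (γ : Idx n → ℂ) :
    coboundDiag (n + 1) (coboundOff n γ) = coboundOff (n + 1) (coboundDiag n γ) := by
  simp [coboundOff, coboundDiag_prependE, coboundDiag_appendE]

def projE (γ : Idx n → ℂ) : Idx n → ℂ := fun J => if J = (fun _ => false) then γ J else 0

lemma projE_of_isEmpty (γ : Idx 0 → ℂ) (X : Idx 0) : projE γ X = γ X := by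
  simp [projE, Subsingleton.elim X (fun _ => false)]

lemma projE_snoc_false (γ : Idx (n + 1) → ℂ) (X : Idx n) :
    projE γ (Fin.snoc X false) = projE (fun Y => γ (Fin.snoc Y false)) X := by
  simp [projE, snoc_eq_const_false_iff]

lemma projE_snoc_true (γ : Idx (n + 1) → ℂ) (X : Idx n) : projE γ (Fin.snoc X true) = 0 := by
  simp [projE, snoc_eq_const_false_iff]

lemma coboundDiag_apply_const_false (γ : Idx n → ℂ) : coboundDiag n γ (fun _ => false) = 0 := by
  induction n with
  | zero => exact coboundDiag_zero_apply γ _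
  | succ n ih => rw [const_false_eq_snoc, coboundDiag_snoc_false, ih]

lemma coboundOff_apply_const_false (γ : Idx n → ℂ) : coboundOff n γ (fun _ => false) = 0 :=
  sub_self (γ fun _ => false)

lemma projE_coboundOff (γ : Idx n → ℂ) : projE (coboundOff n γ) = 0 := by
  funext J
  by_cases hJ : J = fun _ => false <;> simp [projE, hJ, coboundOff_apply_const_false]

lemma coboundDiag_projE (γ : Idx n → ℂ) : coboundDiag n (projE γ) = 0 := by
  induction n with
  | zero => funext J; exact coboundDiag_zero_apply _ J
  | succ n ih =>
    funext J
    cases J using Fin.snocCases with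
    | snoc X c =>
    cases c
    · simp_rw [coboundDiag_snoc_false, projE_snoc_false, ih, Pi.zero_apply]
    · cases X using Fin.snocCases with
      | snoc Y a =>
        simp_rw [coboundDiag_snoc_true, projE_snoc_true]
        cases a <;> simp [projE_snoc_true, ← Pi.zero_def]

lemma coboundOff_projE (γ : Idx n → ℂ) : coboundOff n (projE γ) = 0 := by
  funext J
  by_cases hJ : J = fun _ => false
  · rw [hJ, coboundOff_apply_const_false, Pi.zero_apply]
  have hpre : prependE n (projE γ) J = 0 := by
    cases J using Fin.consCases with
    | cons a Z => cases a <;> simp_all [prependE_cons, projE, cons_eq_const_false_iff]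
  have happ : appendE n (projE γ) J = 0 := by
    cases J using Fin.snocCases with
    | snoc X c => cases c <;> simp_all [appendE_snoc, projE, snoc_eq_const_false_iff]
  simp [coboundOff, hpre, happ]

def oddTrailingF : {n : ℕ} → Idx n → Bool
  | 0, _ => false
  | _ + 1, J => J (Fin.last _) && !oddTrailingF (Fin.init J)

@[simp] lemma oddTrailingF_snoc (X : Idx n) (c : Bool) :
    oddTrailingF (Fin.snoc X c : Idx (n + 1)) = (c && !oddTrailingF X) := by
  simp [oddTrailingF]

def oddPart (γ : Idx n → ℂ) : Idx n → ℂ := fun I => if oddTrailingF I then γ I else 0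

lemma oddPart_snoc_false (γ : Idx (n + 1) → ℂ) :
    (fun Y : Idx n => oddPart γ (Fin.snoc Y false)) = 0 := by
  funext Y; simp [oddPart]

lemma oddPart_snoc_true (γ : Idx (n + 1) → ℂ) :
    (fun Y : Idx n => oddPart γ (Fin.snoc Y true))
      = (fun Y => γ (Fin.snoc Y true)) - oddPart (fun Y => γ (Fin.snoc Y true)) := by
  funext Y; by_cases h : oddTrailingF Y <;> simp [oddPart, h]

lemma coboundDiag_oddPart_snoc (γ : Idx n → ℂ) (X : Idx n) (c : Bool) :
    coboundDiag n (oddPart γ) (Fin.snoc X c)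
      = oddPart (coboundDiag n γ) (Fin.snoc X c) + if c then oddPart γ X else 0 := by
  induction n generalizing c with
  | zero => simp [coboundDiag_zero_apply, oddPart, oddTrailingF]
  | succ n ih =>
    cases X using Fin.snocCases with
    | snoc Y a =>
      cases c
      · rw [coboundDiag_snoc_false, oddPart_snoc_false, map_zero]
        simp [oddPart]
      · have ih' := ih (fun Y => γ (Fin.snoc Y true)) Y a
        rw [coboundDiag_snoc_true, oddPart_snoc_true, map_sub, Pi.sub_apply, ih']
        cases a <;> cases h : oddTrailingF Y <;> simp [oddPart, coboundDiag_snoc_true, h]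

noncomputable def homotopy : (n : ℕ) → (Idx (n + 1) → ℂ) →ₗ[ℂ] (Idx n → ℂ)
  | 0 => 0
  | n + 1 =>
    { toFun := fun β I =>
        if I (Fin.last n) then (if oddTrailingF I then β (Fin.snoc I true) else 0)
        else homotopy n (fun X => β (Fin.snoc X false)) (Fin.init I)
      map_add' := fun β δ => by
        funext I
        have := congrFun (map_add (homotopy n) (fun X => β (Fin.snoc X false))
          (fun X => δ (Fin.snoc X false))) (Fin.init I)
        dsimp only [Pi.add_apply]
        split_ifs <;> first | exact this | simp
      map_smul' := fun c β => by
        funext I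
        have := congrFun (map_smul (homotopy n) c (fun X => β (Fin.snoc X false))) (Fin.init I)
        dsimp only [Pi.smul_apply, smul_eq_mul]
        split_ifs <;> first | exact this | simp }

lemma homotopy_zero_apply (β : Idx 1 → ℂ) (I : Idx 0) : homotopy 0 β I = 0 := rfl

lemma homotopy_snoc_false (β : Idx (n + 2) → ℂ) (X : Idx n) :
    homotopy (n + 1) β (Fin.snoc X false) = homotopy n (fun Y => β (Fin.snoc Y false)) X := by
  simp [homotopy]

lemma homotopy_snoc_true (β : Idx (n + 2) → ℂ) (X : Idx n) :
    homotopy (n + 1) β (Fin.snoc X true)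
      = if oddTrailingF X = false then β (Fin.snoc (Fin.snoc X true) true) else 0 := by
  simp [homotopy]

lemma homotopy_comp_snoc_true (β : Idx (n + 2) → ℂ) :
    (fun Y => homotopy (n + 1) β (Fin.snoc Y true))
      = (fun Y => β (Fin.snoc (Fin.snoc Y true) true))
        - oddPart (fun Y => β (Fin.snoc (Fin.snoc Y true) true)) := by
  funext Y; by_cases h : oddTrailingF Y <;> simp [homotopy_snoc_true, oddPart, h]

lemma coboundDiag_homotopy_add_homotopy_coboundDiag (β : Idx (n + 1) → ℂ) :
    coboundDiag n (homotopy n β) + homotopy (n + 1) (coboundDiag (n + 1) β) = β - projE β := by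
  induction n with
  | zero =>
    funext J
    cases J using Fin.snocCases with
    | snoc X c =>
      cases c <;> simp only [Pi.add_apply, Pi.sub_apply, coboundDiag_zero_apply,
        homotopy_snoc_false, homotopy_zero_apply, projE_snoc_false, projE_of_isEmpty,
        homotopy_snoc_true, coboundDiag_snoc_true, projE_snoc_true, oddTrailingF, Fin.snoc_last]
        <;> simp
  | succ n ih =>
    funext J
    cases J using Fin.snocCases with
    | snoc X c =>
    cases c
    · simp only [Pi.add_apply, Pi.sub_apply, coboundDiag_snoc_false, homotopy_snoc_false,
        projE_snoc_false]
      exact congrFun (ih fun Y => β (Fin.snoc Y false)) X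
    · cases X using Fin.snocCases with
      | snoc Y a =>
      have hodd := coboundDiag_oddPart_snoc (fun Y => β (Fin.snoc (Fin.snoc Y true) true)) Y a
      simp only [Pi.add_apply, Pi.sub_apply, coboundDiag_snoc_true, homotopy_comp_snoc_true,
        map_sub, hodd, projE_snoc_true]
      cases a <;> cases h : oddTrailingF Y <;>
        simp [oddPart, h, homotopy_snoc_true, coboundDiag_snoc_true]

lemma Dlin_dd5_apply_const_false (ψ : Cochain n) (i : Bool) :
    Dlin dd5 n ψ (fun _ => false) i = 0 := by
  cases i <;> simp [Dlin_dd5_apply, coboundDiag_apply_const_false, coboundOff_apply_const_false]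

lemma apply_const_false_of_mem_Bsp {χ : Cochain n} (hχ : χ ∈ Bsp dd5 n) (i : Bool) :
    χ (fun _ => false) i = 0 := by
  cases n with
  | zero => rw [Bsp, Submodule.mem_bot] at hχ; simp [hχ]
  | succ n =>
    obtain ⟨ψ, rfl⟩ := hχ
    exact Dlin_dd5_apply_const_false ψ i

lemma mem_Zsp_of_apply_eq_zero {φ : Cochain n} (hφ : ∀ J ≠ (fun _ => false), ∀ i, φ J i = 0) :
    φ ∈ Zsp dd5 n := by
  have hproj (i : Bool) : (φ · i) = projE (φ · i) := by
    funext J; by_cases hJ : J = fun _ => false <;> simp [projE, hJ, hφ]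
  rw [Zsp, LinearMap.mem_ker]
  funext J i
  rw [Dlin_dd5_apply, hproj true, hproj false]
  simp [coboundDiag_projE, coboundOff_projE]

lemma phiE_mem_Zsp (n : ℕ) : phiE n ∈ Zsp dd5 n :=
  mem_Zsp_of_apply_eq_zero fun J hJ i => by simp [phiE, bC, hJ]

lemma phiF_mem_Zsp (n : ℕ) : phiF n ∈ Zsp dd5 n :=
  mem_Zsp_of_apply_eq_zero fun J hJ i => by simp [phiF, bC, hJ]

lemma smul_phiE_add_smul_phiF_apply (φ : Cochain n) (J : Idx n) (i : Bool) :
    (φ (fun _ => false) false • phiE n + φ (fun _ => false) true • phiF n) J i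
      = projE (φ · i) J := by
  by_cases hJ : J = fun _ => false <;> cases i <;> simp [phiE, phiF, bC, projE, hJ]

lemma sub_smul_phiE_add_smul_phiF_mem_range {φ : Cochain (n + 1)} (hφ : φ ∈ Zsp dd5 (n + 1)) :
    φ - (φ (fun _ => false) false • phiE (n + 1) + φ (fun _ => false) true • phiF (n + 1))
      ∈ LinearMap.range (Dlin dd5 n) := by
  set A := (φ · false)
  set B := (φ · true)
  have hD (J : Idx (n + 2)) (i : Bool) : Dlin dd5 (n + 1) φ J i = 0 := by
    rw [Zsp, LinearMap.mem_ker] at hφ; rw [hφ]; rfl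
  have hB : coboundDiag (n + 1) B = 0 := funext fun J => by simpa [Dlin_dd5_apply] using hD J true
  have hA : coboundDiag (n + 1) A = -coboundOff (n + 1) B := funext fun J => by
    simpa [Dlin_dd5_apply, add_eq_zero_iff_eq_neg] using hD J false
  have hkB := coboundDiag_homotopy_add_homotopy_coboundDiag B
  rw [hB, map_zero, add_zero] at hkB
  have hkA := coboundDiag_homotopy_add_homotopy_coboundDiag A
  rw [hA, map_neg] at hkA
  have hkSkB := coboundDiag_homotopy_add_homotopy_coboundDiag (coboundOff n (homotopy n B))
  rw [coboundDiag_coboundOff, hkB, map_sub, coboundOff_projE, sub_zero,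
    projE_coboundOff, sub_zero] at hkSkB
  refine ⟨fun I i => if i then -homotopy n B I
    else (homotopy n A + homotopy n (coboundOff n (homotopy n B))) I, ?_⟩
  funext J i
  rw [Dlin_dd5_apply, Pi.sub_apply, Pi.sub_apply, smul_phiE_add_smul_phiF_apply]
  cases i
  · have key : coboundDiag n (homotopy n A)
        + coboundDiag n (homotopy n (coboundOff n (homotopy n B)))
        + -coboundOff n (homotopy n B) = A - projE A := by
      linear_combination hkA + hkSkB
    show coboundDiag n (homotopy n A + homotopy n (coboundOff n (homotopy n B))) J
        + coboundOff n (-homotopy n B) J = A J - projE A J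
    rw [map_add, map_neg]
    exact congrFun key J
  · show -coboundDiag n (-homotopy n B) J = B J - projE B J
    rw [map_neg, Pi.neg_apply, neg_neg, hkB, Pi.sub_apply]

lemma sub_smul_phiE_add_smul_phiF_mem_Bsp {φ : Cochain n} (hφ : φ ∈ Zsp dd5 n) :
    φ - (φ (fun _ => false) false • phiE n + φ (fun _ => false) true • phiF n) ∈ Bsp dd5 n := by
  cases n with
  | zero =>
    rw [Bsp, Submodule.mem_bot, sub_eq_zero]
    funext J i
    rw [smul_phiE_add_smul_phiF_apply, projE_of_isEmpty]
  | succ n => exact sub_smul_phiE_add_smul_phiF_mem_range hφ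

noncomputable def evalConstFalse (n : ℕ) : Zsp dd5 n →ₗ[ℂ] ℂ × ℂ where
  toFun φ := (φ.1 (fun _ => false) false, φ.1 (fun _ => false) true)
  map_add' _ _ := rfl
  map_smul' _ _ := rfl

lemma ker_evalConstFalse (n : ℕ) :
    LinearMap.ker (evalConstFalse n) = (Bsp dd5 n).comap (Zsp dd5 n).subtype := by
  ext φ
  simp only [LinearMap.mem_ker, evalConstFalse, LinearMap.coe_mk, AddHom.coe_mk, Prod.mk_eq_zero,
    Submodule.mem_comap, Submodule.coe_subtype]
  constructor
  · rintro ⟨h0, h1⟩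
    simpa [h0, h1] using sub_smul_phiE_add_smul_phiF_mem_Bsp φ.2
  · intro h
    exact ⟨apply_const_false_of_mem_Bsp h false, apply_const_false_of_mem_Bsp h true⟩

lemma evalConstFalse_surjective (n : ℕ) : Function.Surjective (evalConstFalse n) := by
  rintro ⟨a, b⟩
  refine ⟨a • ⟨phiE n, phiE_mem_Zsp n⟩ + b • ⟨phiF n, phiF_mem_Zsp n⟩, ?_⟩
  simp [evalConstFalse, phiE, phiF, bC]

lemma rank_Hsp_dd5 (n : ℕ) : Module.rank ℂ (Hsp dd5 n) = 2 := by
  rw [(Submodule.quotEquivOfEq _ _ (ker_evalConstFalse n).symm).rank_eq,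
    (LinearMap.quotKerEquivOfSurjective _ (evalConstFalse_surjective n)).rank_eq, rank_prod',
    Module.rank_self]
  norm_num

end D5

/-- For `d₅ = ψ_e^{ef} − ψ_e^{fe} − ψ_f^{ff}`: `Hⁿ(d₅)` is 2-dimensional for every
`n ≥ 0`, spanned by the classes of the cocycles `φ_e^{eⁿ}` and `φ_f^{eⁿ}`. -/
theorem d5_cohomology :
    ∀ n : ℕ,
      phiE n ∈ Zsp dd5 n
        ∧ phiF n ∈ Zsp dd5 n
        ∧ Module.rank ℂ (Hsp dd5 n) = 2
        ∧ ∀ φ ∈ Zsp dd5 n, ∃ a b : ℂ, φ - (a • phiE n + b • phiF n) ∈ Bsp dd5 n :=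
  fun n => ⟨D5.phiE_mem_Zsp n, D5.phiF_mem_Zsp n, D5.rank_Hsp_dd5 n,
    fun _ hφ => ⟨_, _, D5.sub_smul_phiE_add_smul_phiF_mem_Bsp hφ⟩⟩
end

section
/- For the codifferential d₅ = ψ_e^{ef} − ψ_e^{fe} − ψ_f^{ff}, both φ_e^{eⁿ} and φ_f^{eⁿ} are Hochschild cocycles: D(φ_e^{eⁿ}) = 0 and D(φ_f^{eⁿ}) = 0 for all n ≥ 0. -/
/-! `φ = φ_i^{eⁿ}` only sees the word `eⁿ`. In `D(φ)(J)` the two terms applying `d₅` after `φ`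
at an end of `J` need `J` minus that end letter to be `eⁿ`; a term applying `φ` after `d₅` to an
adjacent pair needs `J` to be `e` outside that pair, and the `ψ_e^{ef} − ψ_e^{fe}` part of `d₅`
turns these into differences of indicators of "the only `f` of `J` sits at `k+1`, resp. `k`",
which telescope to the boundary. What remains is a finite check on the first and last letters
of `J`, where the end terms of `ψ_e^{ef}`, `ψ_e^{fe}` and `ψ_f^{ff}` cancel the telescoped sum. -/

abbrev allE (n : ℕ) : Idx n := fun _ => false

def singleF {n : ℕ} (t : Fin n) : Idx n := fun s => decide (s = t)

section Indices

variable {n : ℕ}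

@[simp]
theorem pc_allE : pc (allE n) = 0 := by
  simp [pc, pb]

theorem eq_allE_iff_init {J : Idx (n + 1)} :
    J = allE (n + 1) ↔ (fun k : Fin n => J k.castSucc) = allE n ∧ J (Fin.last n) = false := by
  simp only [funext_iff, Fin.forall_fin_succ']

theorem eq_allE_iff_tail {J : Idx (n + 1)} :
    J = allE (n + 1) ↔ (fun k : Fin n => J k.succ) = allE n ∧ J 0 = false := by
  simp only [funext_iff, Fin.forall_fin_succ, and_comm]

theorem eq_singleF_last_iff {J : Idx (n + 1)} :
    J = singleF (Fin.last n) ↔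
      (fun k : Fin n => J k.castSucc) = allE n ∧ J (Fin.last n) = true := by
  simp [funext_iff, Fin.forall_fin_succ', singleF, and_comm]

theorem eq_singleF_zero_iff {J : Idx (n + 1)} :
    J = singleF 0 ↔ (fun k : Fin n => J k.succ) = allE n ∧ J 0 = true := by
  simp [funext_iff, Fin.forall_fin_succ, singleF, and_comm]

theorem eq_singleF_iff_of_forall_ne {J : Idx n} {t u : Fin n} (htu : t ≠ u)
    (hJ : ∀ s, s ≠ t → s ≠ u → J s = false) :
    J = singleF u ↔ J t = false ∧ J u = true := by
  constructor
  · rintro rfl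
    simp [singleF, htu]
  · rintro ⟨ht, hu⟩
    funext s
    by_cases hst : s = t
    · subst hst; simp [singleF, ht, htu]
    by_cases hsu : s = u
    · subst hsu; simp [singleF, hu]
    simp [singleF, hJ s hst hsu, hsu]

theorem repl_false_eq_allE_iff {J : Idx (n + 1)} {k : Fin n} :
    repl J k false = allE n ↔ ∀ s, s ≠ k.castSucc → s ≠ k.succ → J s = false := by
  constructor
  · intro h s hs_cast hs_succ
    rcases lt_or_gt_of_ne hs_cast with hlt | hgt
    · obtain ⟨s', rfl⟩ := Fin.exists_castSucc_eq.mpr (hlt.trans (Fin.castSucc_lt_last k)).ne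
      have hs' : s' < k := Fin.castSucc_lt_castSucc_iff.mp hlt
      simpa [repl, hs'] using congrFun h s'
    · obtain ⟨s', rfl⟩ := Fin.exists_succ_eq.mpr ((Fin.zero_le _).trans_lt hgt).ne'
      have hks : k < s' :=
        (Fin.castSucc_lt_succ_iff.mp hgt).lt_of_ne fun h' => hs_succ (h' ▸ rfl)
      simpa [repl, hks.not_gt, Fin.val_ne_of_ne hks.ne'] using congrFun h s'
  · intro h
    funext s
    simp only [repl]
    split_ifs with hlt heq
    · exact h _ (by simpa [Fin.ext_iff] using hlt.ne) (by simp [Fin.ext_iff]; omega)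
    · rfl
    · exact h _ (by simp [Fin.ext_iff]; omega) (by simpa [Fin.ext_iff] using heq)

theorem repl_true_ne_allE (J : Idx (n + 1)) (k : Fin n) : repl J k true ≠ allE n := by
  intro h
  simpa [repl] using congrFun h k

theorem pcP_eq_zero_of_repl {J : Idx (n + 1)} {k : Fin n} (h : repl J k false = allE n) :
    pcP J k = 0 := by
  rw [repl_false_eq_allE_iff] at h
  refine Finset.sum_eq_zero fun s hs => ?_
  have hsk : s.val < k.val := (Finset.mem_filter.mp hs).2
  have hs_cast : s < k.castSucc := Fin.lt_def.mpr (by simpa using hsk)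
  have hs_succ : s < k.succ := Fin.lt_def.mpr (by rw [Fin.val_succ]; omega)
  simp [h s hs_cast.ne hs_succ.ne, pb]

theorem repl_singleF_eq_allE (k : Fin n) {t : Fin (n + 1)}
    (ht : t = k.castSucc ∨ t = k.succ) : repl (singleF t) k false = allE n := by
  rw [repl_false_eq_allE_iff]
  intro s hs_cast hs_succ
  rcases ht with rfl | rfl <;> simpa [singleF]

end Indices

theorem Fin.sum_univ_succ_sub_castSucc {M : Type*} [AddCommGroup M] {n : ℕ}
    (F : Fin (n + 1) → M) :
    ∑ k : Fin n, (F k.succ - F k.castSucc) = F (Fin.last n) - F 0 := by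
  induction n with
  | zero => simp
  | succ m ih =>
    have h := ih (fun t => F t.castSucc)
    simp only [Fin.castSucc_zero] at h
    rw [Fin.sum_univ_castSucc]
    simp only [Fin.succ_castSucc]
    rw [h, Fin.succ_last]
    abel

section Terms

variable {n : ℕ} (d : Bool → Bool → Bool → ℂ) (J : Idx (n + 1)) (i i' : Bool)

theorem sum_bC_allE_init_mul :
    ∑ j : Bool, bC (allE n) i (fun k => J k.castSucc) j * d j (J (Fin.last n)) i'
      = if (fun k : Fin n => J k.castSucc) = allE n then d i (J (Fin.last n)) i' else 0 := by
  rw [Fintype.sum_bool]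
  cases i <;> split_ifs <;> simp_all [bC]

theorem sum_msign_bC_allE_tail_mul :
    ∑ j : Bool, msign ((pc (fun k : Fin n => J k.succ) + pb j) * pb (J 0)) *
        (bC (allE n) i (fun k => J k.succ) j * d (J 0) j i')
      = if (fun k : Fin n => J k.succ) = allE n then
          msign (pb i * pb (J 0)) * d (J 0) i i' else 0 := by
  rw [Fintype.sum_bool]
  split_ifs with h
  · cases i <;> simp [bC, h]
  · simp [bC, h]

theorem sum_msign_bC_allE_repl_mul (k : Fin n) :
    ∑ j : Bool, msign (pc (repl J k j) + pb i' + pcP J k.val) *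
        (bC (allE n) i (repl J k j) i' * d (J k.castSucc) (J k.succ) j)
      = if i' = i then
          msign (pb i) * (if repl J k false = allE n then d (J k.castSucc) (J k.succ) false else 0)
        else 0 := by
  rw [Fintype.sum_bool]
  by_cases h : repl J k false = allE n
  · split_ifs with hi <;> simp [bC, h, pcP_eq_zero_of_repl h, repl_true_ne_allE, hi]
  · simp [bC, h, repl_true_ne_allE]

end Terms

theorem ite_repl_eq_allE_dd5 {n : ℕ} (J : Idx (n + 1)) (k : Fin n) :
    (if repl J k false = allE n then dd5 (J k.castSucc) (J k.succ) false else 0)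
      = (if J = singleF k.succ then 1 else 0) - (if J = singleF k.castSucc then 1 else 0) := by
  by_cases h : repl J k false = allE n
  · have hJ := repl_false_eq_allE_iff.mp h
    have hne : k.castSucc ≠ k.succ := Fin.castSucc_lt_succ.ne
    simp only [if_pos h, eq_singleF_iff_of_forall_ne hne hJ,
      eq_singleF_iff_of_forall_ne hne.symm fun s h₁ h₂ => hJ s h₂ h₁]
    cases J k.castSucc <;> cases J k.succ <;> simp [dd5, delta2]
  · have h_succ : J ≠ singleF k.succ := by
      rintro rfl; exact h (repl_singleF_eq_allE k (Or.inr rfl))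
    have h_cast : J ≠ singleF k.castSucc := by
      rintro rfl; exact h (repl_singleF_eq_allE k (Or.inl rfl))
    simp [h, h_succ, h_cast]

/-- `P`, `S`: `J` minus its last, resp. first, letter is all `e`; `a`, `b`: first and last letter. -/
theorem dd5_boundary_terms_cancel (P S : Prop) [Decidable P] [Decidable S] (a b i i' : Bool)
    (h : P ∧ b = false ↔ S ∧ a = false) :
    (if P then dd5 i b i' else 0) + (if S then msign (pb i * pb a) * dd5 a i i' else 0)
      - (if i' = i then msign (pb i) *
          ((if P ∧ b = true then 1 else 0) - (if S ∧ a = true then 1 else 0)) else 0) = 0 := by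
  by_cases hP : P <;> by_cases hS : S <;> cases a <;> cases b <;> cases i <;> cases i' <;>
    simp_all [dd5, delta2, msign, pb]

theorem sum_insertion_terms_dd5_bC_allE {n : ℕ} (J : Idx (n + 1)) (i i' : Bool) :
    ∑ k : Fin n, ∑ j : Bool, msign (pc (repl J k j) + pb i' + pcP J k.val) *
        (bC (allE n) i (repl J k j) i' * dd5 (J k.castSucc) (J k.succ) j)
      = if i' = i then msign (pb i) *
          ((if J = singleF (Fin.last n) then 1 else 0) - (if J = singleF 0 then 1 else 0))
        else 0 := by
  simp only [sum_msign_bC_allE_repl_mul, ite_repl_eq_allE_dd5]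
  by_cases hi : i' = i
  · simp only [if_pos hi, ← Finset.mul_sum,
      Fin.sum_univ_succ_sub_castSucc fun t => if J = singleF t then (1 : ℂ) else 0]
  · simp [hi]

theorem Dmap_dd5_bC_allE (n : ℕ) (i : Bool) : Dmap dd5 (bC (allE n) i) = 0 := by
  funext J i'
  simp only [Dmap, Pi.zero_apply, sum_bC_allE_init_mul, sum_msign_bC_allE_tail_mul,
    sum_insertion_terms_dd5_bC_allE, eq_singleF_last_iff, eq_singleF_zero_iff]
  exact dd5_boundary_terms_cancel _ _ _ _ _ _ (eq_allE_iff_init.symm.trans eq_allE_iff_tail)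

/-- For `d₅ = ψ_e^{ef} − ψ_e^{fe} − ψ_f^{ff}`, the cochains `φ_e^{eⁿ}` and `φ_f^{eⁿ}`
are Hochschild cocycles in every degree `n ≥ 0`. -/
theorem d5_basic_cocycles :
    ∀ n : ℕ, Dmap dd5 (phiE n) = 0 ∧ Dmap dd5 (phiF n) = 0 :=
  fun n => ⟨Dmap_dd5_bC_allE n false, Dmap_dd5_bC_allE n true⟩
end

section
/- The infinitesimal deformation d_t = ψ_f^{ee} + t(ψ_e^{ef} − ψ_e^{fe} − ψ_f^{ff}) of the nilpotent codifferential d₆ is, for every t ≠ 0, equivalent under an even linear automorphism to the simple codifferential d₁ = ψ_e^{ef} − ψ_e^{fe} + ψ_f^{ee} − ψ_f^{ff}; i.e., d₆ has a jump deformation to d₁. -/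
/-- The infinitesimal deformation
`d_t = ψ_f^{ee} + t(ψ_e^{ef} − ψ_e^{fe} − ψ_f^{ff})` of the nilpotent codifferential
`d₆` is, for every `t ≠ 0`, equivalent under an even linear automorphism to the
simple codifferential `d₁`: `d₆` has a jump deformation to `d₁`. -/
theorem d6_jump_deformation_to_d1 :
    ∀ t : ℂ, t ≠ 0 → EquivCod (fun a b i => dd6 a b i + t * dd5 a b i) dd1 := by
  intro t ht
  obtain ⟨z, hz⟩ := IsAlgClosed.exists_pow_nat_eq (t⁻¹) (n := 2) (by norm_num)
  have hz0 : z ≠ 0 := by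
    intro h; rw [h] at hz; simp at hz; exact ht (by simpa using hz.symm)
  refine ⟨z, t⁻¹, hz0, inv_ne_zero ht, ?_⟩
  intro a b i
  have hz2 : z * z = t⁻¹ := by rw [← hz]; ring
  fin_cases a <;> fin_cases b <;> fin_cases i <;>
    simp [dd1, dd5, dd6, delta2, gsc, hz2] <;> field_simp
end
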